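/- Let I be a function on a set S with values in a commutative ℚ-algebra A satisfying the unit relation and the shuffle product formula (relations (i) and (ii) of an iterated-integral symbol; relations (iii) and (iv) are not needed). Then for every m ≥ 1 and all a_0, a_1, ..., a_{m+1} ∈ S one has I(a_0; a_1, ..., a_m; a_{m+1}) + Σ_{k=0}^{m−1} (−1)^{m−k} · I(a_0; a_1, ..., a_k; a_{m+1}) · I(a_0; a_m, a_{m−1}, ..., a_{k+1}; a_{m+1}) = 0. -/

import Mathlib

/-!
STATEMENT 1. If `I` satisfies the unit relation and the shuffle product formula, then
for every `m ≥ 1` and `a₀, …, a_{m+1} ∈ S`,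
`I(a₀; a₁, …, a_m; a_{m+1}) + Σ_{k=0}^{m−1} (−1)^{m−k} I(a₀; a₁, …, a_k; a_{m+1}) ·
I(a₀; a_m, …, a_{k+1}; a_{m+1}) = 0`.
-/

/-- The multiset of all shuffles of two lists. -/
def shuffles {α : Type*} : List α → List α → Multiset (List α)
  | [], l => {l}
  | x :: l, [] => {x :: l}
  | a :: l, b :: m =>
      ((shuffles l (b :: m)).map (a :: ·)) + ((shuffles (a :: l) m).map (b :: ·))
  termination_by l m => l.length + m.length

/-- A function on a set `S`, with values in a commutative ℚ-algebra `A`, satisfying the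
unit relation (i) and the shuffle product formula (ii) of an iterated-integral symbol. -/
structure ShuffleSymbol (S : Type*) (A : Type*) [CommRing A] [Algebra ℚ A] where
  I : S → List S → S → A
  unit : ∀ a b : S, I a [] b = 1
  shuffle_mul : ∀ (a b : S) (l₁ l₂ : List S),
    I a l₁ b * I a l₂ b = ((shuffles l₁ l₂).map fun w => I a w b).sum

/-!
Split the shuffle expansion of `I(a₁ … a_k) · I(a_m … a_{k+1})` according to whether a word
ends in the last letter `a_k` of the left factor or in the last letter `a_{k+1}` of the right one.
If `h k` denotes the first part, the second part is `h (k + 1)`, so the `k`-th product is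
`h k + h (k + 1)` with `h 0 = h (m + 1) = 0`, and the alternating sum telescopes to zero.
-/

theorem shuffles_nil_left {α : Type*} (l : List α) : shuffles [] l = {l} := by
  cases l <;> simp [shuffles]

theorem shuffles_nil_right {α : Type*} (l : List α) : shuffles l [] = {l} := by
  cases l <;> simp [shuffles]

theorem shuffles_cons_cons {α : Type*} (x y : α) (l m : List α) :
    shuffles (x :: l) (y :: m) =
      (shuffles l (y :: m)).map (x :: ·) + (shuffles (x :: l) m).map (y :: ·) := by
  rw [shuffles]

theorem shuffles_append_singleton {α : Type*} (x y : α) : ∀ u v : List α,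
    shuffles (u ++ [x]) (v ++ [y]) =
      (shuffles u (v ++ [y])).map (· ++ [x]) + (shuffles (u ++ [x]) v).map (· ++ [y])
  | [], [] => by simp [shuffles_cons_cons, shuffles_nil_left, shuffles_nil_right, add_comm]
  | [], b :: v => by
    have ih := shuffles_append_singleton x y [] v
    simp only [List.nil_append] at ih
    simp only [List.nil_append, List.cons_append, shuffles_cons_cons, shuffles_nil_left, ih,
      Multiset.map_map, Multiset.map_add, Function.comp_def, Multiset.map_singleton]
    abel
  | a :: u, [] => by
    have ih := shuffles_append_singleton x y u []
    simp only [List.nil_append] at ih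
    simp only [List.nil_append, List.cons_append, shuffles_cons_cons, shuffles_nil_right, ih,
      Multiset.map_map, Multiset.map_add, Function.comp_def, Multiset.map_singleton]
    abel
  | a :: u, b :: v => by
    have ih₁ := shuffles_append_singleton x y u (b :: v)
    have ih₂ := shuffles_append_singleton x y (a :: u) v
    simp only [List.cons_append] at ih₁ ih₂ ⊢
    rw [shuffles_cons_cons, ih₁, ih₂, shuffles_cons_cons a b u, shuffles_cons_cons a b (u ++ [x])]
    simp only [Multiset.map_add, Multiset.map_map, Function.comp_def, List.cons_append]
    abel
  termination_by u v => u.length + v.length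

theorem Finset.sum_neg_one_pow_mul_add_succ {R : Type*} [Ring R] (h : ℕ → R) :
    ∀ m : ℕ, ∑ k ∈ Finset.range (m + 1), (-1 : R) ^ (m - k) * (h k + h (k + 1)) =
      (-1) ^ m * h 0 + h (m + 1)
  | 0 => by simp
  | m + 1 => by
    have hsign : ∀ k ∈ Finset.range (m + 1), (-1 : R) ^ (m + 1 - k) * (h k + h (k + 1)) =
        -((-1) ^ (m - k) * (h k + h (k + 1))) := fun k hk => by
      rw [Nat.sub_add_comm (Finset.mem_range_succ_iff.mp hk), pow_succ, mul_neg_one, neg_mul]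
    rw [Finset.sum_range_succ, Finset.sum_congr rfl hsign, Finset.sum_neg_distrib,
      Finset.sum_neg_one_pow_mul_add_succ h m, Nat.sub_self, pow_succ]
    noncomm_ring

namespace ShuffleSymbol

variable {S A : Type*} [CommRing A] [Algebra ℚ A] (𝕀 : ShuffleSymbol S A) (a b : S)

theorem I_append_singleton_mul (u v : List S) (x y : S) :
    𝕀.I a (u ++ [x]) b * 𝕀.I a (v ++ [y]) b =
      ((shuffles u (v ++ [y])).map fun w => 𝕀.I a (w ++ [x]) b).sum +
        ((shuffles (u ++ [x]) v).map fun w => 𝕀.I a (w ++ [y]) b).sum := by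
  rw [𝕀.shuffle_mul, shuffles_append_singleton, Multiset.map_add, Multiset.sum_add,
    Multiset.map_map, Multiset.map_map]
  rfl

def lastLetterFromLeft (l : List S) : ℕ → A
  | 0 => 0
  | k + 1 =>
    if hk : k < l.length then
      ((shuffles (l.take k) (l.drop (k + 1)).reverse).map fun w => 𝕀.I a (w ++ [l[k]]) b).sum
    else 0

theorem I_take_mul_I_drop_reverse (l : List S) (hl : l ≠ []) {k : ℕ} (hk : k ≤ l.length) :
    𝕀.I a (l.take k) b * 𝕀.I a (l.drop k).reverse b =
      𝕀.lastLetterFromLeft a b l k + 𝕀.lastLetterFromLeft a b l (k + 1) := by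
  obtain _ | j := k
  · obtain ⟨x, t, rfl⟩ := List.exists_cons_of_ne_nil hl
    simp [lastLetterFromLeft, 𝕀.unit, shuffles_nil_left]
  obtain hj | hj := hk.eq_or_lt
  · have hlast : l.take j ++ [l[j]] = l := by
      rw [← List.take_succ_eq_append_getElem, hj, List.take_length]
    have hdrop : l.drop (j + 1) = [] := List.drop_eq_nil_of_le hj.ge
    have htake : l.take (j + 1) = l := List.take_of_length_le hj.ge
    simp [lastLetterFromLeft, htake, hdrop, 𝕀.unit, shuffles_nil_right, hlast, ← hj]
  · rw [List.take_succ_eq_append_getElem (by omega), List.drop_eq_getElem_cons hj,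
      List.reverse_cons, I_append_singleton_mul, ← List.reverse_cons,
      ← List.drop_eq_getElem_cons (by omega), ← List.take_succ_eq_append_getElem]
    simp only [lastLetterFromLeft, dif_pos hj, dif_pos (show j < l.length by omega)]

end ShuffleSymbol

theorem shuffleSymbol_alternating_sum {S A : Type*} [CommRing A] [Algebra ℚ A]
    (𝕀 : ShuffleSymbol S A) (a b : S) (l : List S) (hl : l ≠ []) :
    𝕀.I a l b + ∑ k ∈ Finset.range l.length,
      (-1 : A) ^ (l.length - k) * 𝕀.I a (l.take k) b * 𝕀.I a ((l.drop k).reverse) b = 0 := by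
  set h := 𝕀.lastLetterFromLeft a b l
  calc _ = ∑ k ∈ Finset.range (l.length + 1),
        (-1 : A) ^ (l.length - k) * (𝕀.I a (l.take k) b * 𝕀.I a (l.drop k).reverse b) := by
        simp [Finset.sum_range_succ, 𝕀.unit, mul_assoc, add_comm]
    _ = ∑ k ∈ Finset.range (l.length + 1), (-1 : A) ^ (l.length - k) * (h k + h (k + 1)) :=
        Finset.sum_congr rfl fun k hk => by
          rw [𝕀.I_take_mul_I_drop_reverse a b l hl (Finset.mem_range_succ_iff.mp hk)]
    _ = (-1) ^ l.length * h 0 + h (l.length + 1) :=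
        Finset.sum_neg_one_pow_mul_add_succ h l.length
    _ = 0 := by simp [h, ShuffleSymbol.lastLetterFromLeft]
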